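/- arXiv:1407.1070 — 5 statements merged into one kernel-verified Lean document; each statement's English description precedes it below -/
import Mathlib

section
/- Let n, p ≥ 1, let X, U ∈ ℝ^{n×p} with W = X + U, and denote by x_i, u_i, w_i the i-th rows. Let μ : ℝ → ℝ be infinitely differentiable, β⁰ ∈ ℝ^p, y ∈ ℝ^n, and set ε_i = y_i − μ(x_iᵀβ⁰). Assume: (i) (1/n)∑_{i=1}^n w_{ij}² = 1 for every j; (ii) (1/n) max_{1≤j≤p} |∑_{i=1}^n w_{ij} ε_i| ≤ λ; (iii) |u_{ij}| ≤ δ for all i, j; (iv) for each i, the Taylor series ∑_{r=0}^∞ μ^{(r)}(w_iᵀβ⁰)/r! · (−u_iᵀβ⁰)^r has sum μ(x_iᵀβ⁰); (v) the series with r-th term (δ^r ‖β⁰‖₁^r / r!) · (∑_{i=1}^n μ^{(r)}(w_iᵀβ⁰)²)^{1/2} (r ≥ 1) is summable. Then for every j = 1,…,p: (1/n)|∑_{i=1}^n w_{ij}(y_i − μ(w_iᵀβ⁰))| ≤ λ + ∑_{r=1}^∞ δ^r/(r!·√n) · ‖β⁰‖₁^r · (∑_{i=1}^n μ^{(r)}(w_iᵀβ⁰)²)^{1/2}.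 -/
/-- Proposition 1 of the paper: under the additive measurement error model
`W = X + U` with standardized measured covariates, the bounds
`(1/n) max_j |∑ᵢ wᵢⱼ εᵢ| ≤ λ` and `|uᵢⱼ| ≤ δ`, the exactness of the Taylor
expansion of `μ` around `wᵢᵀβ⁰` (hypothesis iv) and summability of the bounding
series (hypothesis v), the true coefficient vector `β⁰` lies in the feasible set
`Θ` of the generalized matrix uncertainty selector.  The series over `r ≥ 1` is
indexed by `r = k + 1`, `k : ℕ`. -/
theorem stmt_0 (n p : ℕ) (hn : 1 ≤ n) (hp : 1 ≤ p)
    (X U W : Fin n → Fin p → ℝ)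
    (hW : ∀ i j, W i j = X i j + U i j)
    (μ : ℝ → ℝ) (hμ : ContDiff ℝ (⊤ : ℕ∞) μ)
    (β : Fin p → ℝ) (y : Fin n → ℝ) (ε : Fin n → ℝ)
    (hε : ∀ i, ε i = y i - μ (∑ j, X i j * β j))
    (lam δ : ℝ)
    (hstd : ∀ j, (1 / (n : ℝ)) * ∑ i, (W i j) ^ 2 = 1)
    (hlam : ∀ j, (1 / (n : ℝ)) * |∑ i, W i j * ε i| ≤ lam)
    (hδ : ∀ i j, |U i j| ≤ δ)
    (htaylor : ∀ i, HasSum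
      (fun r : ℕ => iteratedDeriv r μ (∑ j, W i j * β j) / (Nat.factorial r : ℝ) *
        (-(∑ j, U i j * β j)) ^ r)
      (μ (∑ j, X i j * β j)))
    (hsum : Summable (fun k : ℕ =>
      δ ^ (k + 1) * (∑ j, |β j|) ^ (k + 1) / (Nat.factorial (k + 1) : ℝ) *
        Real.sqrt (∑ i, (iteratedDeriv (k + 1) μ (∑ j, W i j * β j)) ^ 2))) :
    ∀ j, (1 / (n : ℝ)) * |∑ i, W i j * (y i - μ (∑ j', W i j' * β j'))| ≤
      lam + ∑' k : ℕ,
        δ ^ (k + 1) / ((Nat.factorial (k + 1) : ℝ) * Real.sqrt n) *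
          (∑ j', |β j'|) ^ (k + 1) *
          Real.sqrt (∑ i, (iteratedDeriv (k + 1) μ (∑ j', W i j' * β j')) ^ 2) := by
  intro j
  have hn0 : (0 : ℝ) < n := by exact_mod_cast Nat.lt_of_lt_of_le Nat.zero_lt_one hn
  have hsn : Real.sqrt n > 0 := Real.sqrt_pos.mpr hn0
  have hδ0 : (0 : ℝ) ≤ δ := le_trans (abs_nonneg _) (hδ ⟨0, hn⟩ ⟨0, hp⟩)
  set L : ℝ := ∑ j', |β j'| with hLdef
  have hL0 : 0 ≤ L := Finset.sum_nonneg fun _ _ => abs_nonneg _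
  set s : Fin n → ℝ := fun i => ∑ j', W i j' * β j' with hsdef
  set t : Fin n → ℝ := fun i => ∑ j', U i j' * β j' with htdef
  set D : ℕ → Fin n → ℝ := fun r i => iteratedDeriv r μ (s i) with hDdef
  -- |t i| ≤ δ * L
  have htb : ∀ i, |t i| ≤ δ * L := by
    intro i
    calc |t i| ≤ ∑ j', |U i j' * β j'| := Finset.abs_sum_le_sum_abs _ _
      _ ≤ ∑ j', δ * |β j'| := by
          refine Finset.sum_le_sum fun j' _ => ?_
          rw [abs_mul]
          exact mul_le_mul_of_nonneg_right (hδ i j') (abs_nonneg _)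
      _ = δ * L := by rw [hLdef, Finset.mul_sum]
  -- Taylor remainder
  have hg : ∀ i, HasSum
      (fun k : ℕ => D (k + 1) i / (Nat.factorial (k + 1) : ℝ) * (-(t i)) ^ (k + 1))
      (μ (∑ j', X i j' * β j') - μ (s i)) := by
    intro i
    have h := (hasSum_nat_add_iff'
      (f := fun r : ℕ => D r i / (Nat.factorial r : ℝ) * (-(t i)) ^ r) 1).mpr (htaylor i)
    simpa [hDdef, iteratedDeriv_zero] using h
  -- per-k sum over i
  set A : ℕ → ℝ := fun k => ∑ i, W i j * (D (k + 1) i / (Nat.factorial (k + 1) : ℝ) *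
      (-(t i)) ^ (k + 1)) with hAdef
  have hA : HasSum A (∑ i, W i j * (μ (∑ j', X i j' * β j') - μ (s i))) := by
    refine hasSum_sum fun i _ => (hg i).mul_left (W i j)
  have hAabs : Summable fun k => |A k| := hA.summable.abs
  -- decomposition of the main sum
  have hdecomp : ∑ i, W i j * (y i - μ (s i)) =
      (∑ i, W i j * ε i) + ∑' k, A k := by
    rw [hA.tsum_eq, ← Finset.sum_add_distrib]
    refine Finset.sum_congr rfl fun i _ => ?_
    rw [hε i]; ring
  -- ∑ W i j ^2 = n
  have hWn : ∑ i, (W i j) ^ 2 = (n : ℝ) := by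
    have := hstd j
    field_simp at this
    linarith
  have hsqW : Real.sqrt (∑ i, (W i j) ^ 2) = Real.sqrt n := by rw [hWn]
  -- pointwise bound on |A k|
  have hAk : ∀ k, |A k| ≤ (δ * L) ^ (k + 1) / (Nat.factorial (k + 1) : ℝ) *
      (Real.sqrt n * Real.sqrt (∑ i, (D (k + 1) i) ^ 2)) := by
    intro k
    have hCS : ∑ i, |W i j| * |D (k + 1) i| ≤
        Real.sqrt n * Real.sqrt (∑ i, (D (k + 1) i) ^ 2) := by
      have h1 := Real.sum_mul_le_sqrt_mul_sqrt Finset.univ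
        (fun i => |W i j|) (fun i => |D (k + 1) i|)
      simpa [sq_abs, hWn] using h1
    calc |A k| ≤ ∑ i, |W i j * (D (k + 1) i / (Nat.factorial (k + 1) : ℝ) *
          (-(t i)) ^ (k + 1))| := Finset.abs_sum_le_sum_abs _ _
      _ ≤ ∑ i, (δ * L) ^ (k + 1) / (Nat.factorial (k + 1) : ℝ) *
            (|W i j| * |D (k + 1) i|) := by
          refine Finset.sum_le_sum fun i _ => ?_
          rw [abs_mul, abs_mul, abs_div, abs_pow, abs_neg]
          have hfac : (0 : ℝ) < (Nat.factorial (k + 1) : ℝ) := by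
            exact_mod_cast Nat.factorial_pos (k + 1)
          rw [abs_of_pos hfac]
          have htpow : |t i| ^ (k + 1) ≤ (δ * L) ^ (k + 1) :=
            pow_le_pow_left₀ (abs_nonneg _) (htb i) _
          calc |W i j| * (|D (k + 1) i| / (Nat.factorial (k + 1) : ℝ) * |t i| ^ (k + 1))
              ≤ |W i j| * (|D (k + 1) i| / (Nat.factorial (k + 1) : ℝ) * (δ * L) ^ (k + 1)) := by
                refine mul_le_mul_of_nonneg_left (mul_le_mul_of_nonneg_left htpow ?_) (abs_nonneg _)
                positivity
            _ = (δ * L) ^ (k + 1) / (Nat.factorial (k + 1) : ℝ) * (|W i j| * |D (k + 1) i|) := by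
                ring
      _ = (δ * L) ^ (k + 1) / (Nat.factorial (k + 1) : ℝ) *
            ∑ i, |W i j| * |D (k + 1) i| := (Finset.mul_sum _ _ _).symm
      _ ≤ _ := by
          refine mul_le_mul_of_nonneg_left hCS ?_
          positivity
  -- define the target series term
  set B : ℕ → ℝ := fun k => δ ^ (k + 1) / ((Nat.factorial (k + 1) : ℝ) * Real.sqrt n) *
      L ^ (k + 1) * Real.sqrt (∑ i, (D (k + 1) i) ^ 2) with hBdef
  have hBsum : Summable B := by
    have h := hsum.mul_left (1 / Real.sqrt n)
    refine h.congr fun k => ?_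
    simp only [hBdef, hDdef, hsdef]
    ring
  -- (1/n) |A k| ≤ B k
  have hkey : ∀ k, (1 / (n : ℝ)) * |A k| ≤ B k := by
    intro k
    have hns : (1 : ℝ) / n * Real.sqrt n = 1 / Real.sqrt n := by
      rw [div_mul_eq_mul_div, one_mul, div_eq_div_iff hn0.ne' hsn.ne', one_mul,
        Real.mul_self_sqrt hn0.le]
    have h1 : (1 / (n : ℝ)) * ((δ * L) ^ (k + 1) / (Nat.factorial (k + 1) : ℝ) *
        (Real.sqrt n * Real.sqrt (∑ i, (D (k + 1) i) ^ 2))) = B k := by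
      calc (1 / (n : ℝ)) * ((δ * L) ^ (k + 1) / (Nat.factorial (k + 1) : ℝ) *
            (Real.sqrt n * Real.sqrt (∑ i, (D (k + 1) i) ^ 2)))
          = ((1 : ℝ) / n * Real.sqrt n) * ((δ * L) ^ (k + 1) / (Nat.factorial (k + 1) : ℝ) *
            Real.sqrt (∑ i, (D (k + 1) i) ^ 2)) := by ring
        _ = (1 / Real.sqrt n) * ((δ * L) ^ (k + 1) / (Nat.factorial (k + 1) : ℝ) *
            Real.sqrt (∑ i, (D (k + 1) i) ^ 2)) := by rw [hns]
        _ = B k := by simp only [hBdef, mul_pow]; ring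
    calc (1 / (n : ℝ)) * |A k| ≤ (1 / (n : ℝ)) * ((δ * L) ^ (k + 1) / (Nat.factorial (k + 1) : ℝ) *
          (Real.sqrt n * Real.sqrt (∑ i, (D (k + 1) i) ^ 2))) := by
          exact mul_le_mul_of_nonneg_left (hAk k) (by positivity)
      _ = B k := h1
  -- assemble
  have hAbsSum : |∑' k, A k| ≤ ∑' k, |A k| := by
    calc |∑' k, A k| = ‖∑' k, A k‖ := (Real.norm_eq_abs _).symm
      _ ≤ ∑' k, ‖A k‖ := norm_tsum_le_tsum_norm (by simpa [Real.norm_eq_abs] using hAabs)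
      _ = ∑' k, |A k| := by simp [Real.norm_eq_abs]
  have hSsum : Summable fun k => (1 / (n : ℝ)) * |A k| := hAabs.mul_left _
  have htsum_le : ∑' k, (1 / (n : ℝ)) * |A k| ≤ ∑' k, B k :=
    Summable.tsum_le_tsum hkey hSsum hBsum
  calc (1 / (n : ℝ)) * |∑ i, W i j * (y i - μ (s i))|
      = (1 / (n : ℝ)) * |(∑ i, W i j * ε i) + ∑' k, A k| := by rw [hdecomp]
    _ ≤ (1 / (n : ℝ)) * (|∑ i, W i j * ε i| + |∑' k, A k|) := by
        exact mul_le_mul_of_nonneg_left (abs_add_le _ _) (by positivity)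
    _ = (1 / (n : ℝ)) * |∑ i, W i j * ε i| + (1 / (n : ℝ)) * |∑' k, A k| := by ring
    _ ≤ lam + ∑' k, (1 / (n : ℝ)) * |A k| := by
        refine add_le_add (hlam j) ?_
        rw [tsum_mul_left]
        exact mul_le_mul_of_nonneg_left hAbsSum (by positivity)
    _ ≤ lam + ∑' k, B k := by linarith
end

section
/- Let n, p ≥ 1, let X, U ∈ ℝ^{n×p} with W = X + U, and denote by x_i, u_i, w_i the i-th rows. Let μ : ℝ → ℝ be a polynomial function of degree at most R (so μ^{(r)} ≡ 0 for all r > R), β⁰ ∈ ℝ^p, y ∈ ℝ^n, and set ε_i = y_i − μ(x_iᵀβ⁰). Assume: (i) (1/n)∑_{i=1}^n w_{ij}² = 1 for every j; (ii) (1/n) max_{1≤j≤p} |∑_{i=1}^n w_{ij} ε_i| ≤ λ; (iii) |u_{ij}| ≤ δ for all i, j. Then for every j = 1,…,p: (1/n)|∑_{i=1}^n w_{ij}(y_i − μ(w_iᵀβ⁰))| ≤ λ + ∑_{r=1}^R δ^r/(r!·√n) · ‖β⁰‖₁^r · (∑_{i=1}^n μ^{(r)}(w_iᵀβ⁰)²)^{1/2},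 i.e. β⁰ belongs to the feasible set Θ^R of the order-R generalized matrix uncertainty selector. -/
/-!
Write `xᵢᵀβ⁰ = wᵢᵀβ⁰ + hᵢ` with `hᵢ = -uᵢᵀβ⁰`, so that `|hᵢ| ≤ δ‖β⁰‖₁`. Since `μ` is a polynomial
of degree at most `R`, its Taylor expansion around `wᵢᵀβ⁰` is exact, and
`yᵢ - μ(wᵢᵀβ⁰) = εᵢ + ∑_{r=1}^R μ^{(r)}(wᵢᵀβ⁰) hᵢ^r / r!`. Pairing with the column `w_j`, the
`ε`-part is at most `λ`, and each order-`r` term is bounded by Cauchy–Schwarz, using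
`‖w_j‖₂ = √n` from the standardization.
-/

open Finset Polynomial
open scoped Nat

theorem Polynomial.iteratedDeriv_eval (P : ℝ[X]) (r : ℕ) :
    iteratedDeriv r (fun x => P.eval x) = fun x => (derivative^[r] P).eval x := by
  induction r with
  | zero => simp
  | succ r ih =>
    rw [iteratedDeriv_succ, ih, Function.iterate_succ_apply']
    funext x
    exact Polynomial.deriv _

theorem Polynomial.eval_add_eq_sum_range_iteratedDeriv (P : ℝ[X]) {R : ℕ}
    (hdeg : P.natDegree ≤ R) (a h : ℝ) :
    P.eval (a + h) =
      ∑ r ∈ range (R + 1), iteratedDeriv r (fun x => P.eval x) a / r ! * h ^ r := by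
  rw [add_comm, ← taylor_eval, eval_eq_sum_range' (n := R + 1) (by rw [natDegree_taylor]; omega)]
  refine sum_congr rfl fun r _ => ?_
  have hfac : (r ! : ℝ) ≠ 0 := by positivity
  simp only [taylor_coeff, iteratedDeriv_eval, ← factorial_smul_hasseDeriv]
  rw [LinearMap.smul_apply, eval_smul, nsmul_eq_mul]
  field_simp

theorem Polynomial.eval_add_sub_eval_eq_sum_Icc_iteratedDeriv (P : ℝ[X]) {R : ℕ}
    (hdeg : P.natDegree ≤ R) (a h : ℝ) :
    P.eval (a + h) - P.eval a =
      ∑ r ∈ Icc 1 R, iteratedDeriv r (fun x => P.eval x) a / r ! * h ^ r := by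
  rw [eval_add_eq_sum_range_iteratedDeriv P hdeg, range_eq_Ico,
    sum_eq_sum_Ico_succ_bot (Nat.succ_pos R), Nat.succ_eq_add_one, Ico_add_one_right_eq_Icc]
  simp

theorem abs_sum_mul_le_mul_sum_abs {ι : Type*} (s : Finset ι) (u b : ι → ℝ) {δ : ℝ}
    (hu : ∀ i ∈ s, |u i| ≤ δ) :
    |∑ i ∈ s, u i * b i| ≤ δ * ∑ i ∈ s, |b i| := by
  calc |∑ i ∈ s, u i * b i| ≤ ∑ i ∈ s, |u i * b i| := abs_sum_le_sum_abs _ _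
    _ ≤ ∑ i ∈ s, δ * |b i| := sum_le_sum fun i hi => by
        rw [abs_mul]; exact mul_le_mul_of_nonneg_right (hu i hi) (abs_nonneg _)
    _ = δ * ∑ i ∈ s, |b i| := (mul_sum _ _ _).symm

theorem abs_sum_mul_mul_le {ι : Type*} (s : Finset ι) (w d e : ι → ℝ) {c : ℝ}
    (he : ∀ i ∈ s, |e i| ≤ c) :
    |∑ i ∈ s, w i * (d i * e i)| ≤ c * (√(∑ i ∈ s, w i ^ 2) * √(∑ i ∈ s, d i ^ 2)) := by
  rcases s.eq_empty_or_nonempty with rfl | ⟨i₀, hi₀⟩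
  · simp
  have hc : 0 ≤ c := (abs_nonneg _).trans (he i₀ hi₀)
  calc |∑ i ∈ s, w i * (d i * e i)| ≤ ∑ i ∈ s, |w i * (d i * e i)| := abs_sum_le_sum_abs _ _
    _ ≤ ∑ i ∈ s, c * (|w i| * |d i|) := sum_le_sum fun i hi => by
        rw [abs_mul, abs_mul, ← mul_assoc, mul_comm c]
        exact mul_le_mul_of_nonneg_left (he i hi) (by positivity)
    _ = c * ∑ i ∈ s, |w i| * |d i| := (mul_sum _ _ _).symm
    _ ≤ c * (√(∑ i ∈ s, w i ^ 2) * √(∑ i ∈ s, d i ^ 2)) := by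
        gcongr
        simpa only [sq_abs] using Real.sum_mul_le_sqrt_mul_sqrt s (|w ·|) (|d ·|)

theorem Polynomial.abs_sum_mul_eval_add_sub_eval_le {ι : Type*} (s : Finset ι) (P : ℝ[X])
    {R : ℕ} (hdeg : P.natDegree ≤ R) (w a h : ι → ℝ) {c : ℝ} (hh : ∀ i ∈ s, |h i| ≤ c) :
    |∑ i ∈ s, w i * (P.eval (a i + h i) - P.eval (a i))| ≤
      ∑ r ∈ Icc 1 R, c ^ r / r ! * (√(∑ i ∈ s, w i ^ 2) *
        √(∑ i ∈ s, iteratedDeriv r (fun x => P.eval x) (a i) ^ 2)) := by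
  simp_rw [eval_add_sub_eval_eq_sum_Icc_iteratedDeriv P hdeg, mul_sum]
  rw [sum_comm]
  refine (abs_sum_le_sum_abs _ _).trans (sum_le_sum fun r _ => ?_)
  have hfac : (0 : ℝ) < r ! := by positivity
  have hpow : ∀ i ∈ s, |h i ^ r| ≤ c ^ r := fun i hi => by
    rw [abs_pow]; exact pow_le_pow_left₀ (abs_nonneg _) (hh i hi) r
  calc |∑ i ∈ s, w i * (iteratedDeriv r (fun x => P.eval x) (a i) / r ! * h i ^ r)|
      = |∑ i ∈ s, w i * (iteratedDeriv r (fun x => P.eval x) (a i) * h i ^ r)| / r ! := by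
        rw [← abs_of_pos hfac, ← abs_div, sum_div, abs_of_pos hfac]
        congr 1; exact sum_congr rfl fun i _ => by ring
    _ ≤ c ^ r * (√(∑ i ∈ s, w i ^ 2) *
          √(∑ i ∈ s, iteratedDeriv r (fun x => P.eval x) (a i) ^ 2)) / r ! := by
        gcongr; exact abs_sum_mul_mul_le s _ _ _ hpow
    _ = _ := by ring

theorem stmt_1_general (n p R : ℕ)
    (X U W : Fin n → Fin p → ℝ)
    (hW : ∀ i j, W i j = X i j + U i j)
    (μ : ℝ → ℝ) (P : Polynomial ℝ) (hdeg : P.natDegree ≤ R)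
    (hμP : ∀ x, μ x = P.eval x)
    (β : Fin p → ℝ) (y : Fin n → ℝ) (ε : Fin n → ℝ)
    (hε : ∀ i, ε i = y i - μ (∑ j, X i j * β j))
    (lam δ : ℝ)
    (hstd : ∀ j, (1 / (n : ℝ)) * ∑ i, (W i j) ^ 2 = 1)
    (hlam : ∀ j, (1 / (n : ℝ)) * |∑ i, W i j * ε i| ≤ lam)
    (hδ : ∀ i j, |U i j| ≤ δ) :
    ∀ j, (1 / (n : ℝ)) * |∑ i, W i j * (y i - μ (∑ j', W i j' * β j'))| ≤
      lam + ∑ r ∈ Finset.Icc 1 R,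
        δ ^ r / ((Nat.factorial r : ℝ) * Real.sqrt n) * (∑ j', |β j'|) ^ r *
          Real.sqrt (∑ i, (iteratedDeriv r μ (∑ j', W i j' * β j')) ^ 2) := by
  intro j
  obtain rfl : μ = fun x => P.eval x := funext hμP
  set s : Fin n → ℝ := fun i => ∑ j', W i j' * β j'
  set h : Fin n → ℝ := fun i => ∑ j', -U i j' * β j'
  have hh : ∀ i ∈ univ, |h i| ≤ δ * ∑ j', |β j'| := fun i _ =>
    abs_sum_mul_le_mul_sum_abs _ _ _ fun j' _ => (abs_neg (U i j')).trans_le (hδ i j')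
  have hy : ∀ i, y i - P.eval (s i) = ε i + (P.eval (s i + h i) - P.eval (s i)) := fun i => by
    have hx : ∑ j', X i j' * β j' = s i + h i := by
      simp only [s, h, ← sum_add_distrib, hW]; exact sum_congr rfl fun _ _ => by ring
    rw [hε, hx]; ring
  have hcol : ∑ i, W i j ^ 2 = n := by
    rcases Nat.eq_zero_or_pos n with rfl | hn
    · simp
    · have := hstd j; field_simp at this; exact this
  calc (1 / (n : ℝ)) * |∑ i, W i j * (y i - P.eval (s i))|
      ≤ 1 / n * |∑ i, W i j * ε i| +
          1 / n * |∑ i, W i j * (P.eval (s i + h i) - P.eval (s i))| := by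
        rw [← mul_add]
        gcongr
        simp only [hy, mul_add, sum_add_distrib]
        exact abs_add_le _ _
    _ ≤ lam + 1 / n * ∑ r ∈ Icc 1 R, (δ * ∑ j', |β j'|) ^ r / r ! *
          (√(∑ i, W i j ^ 2) * √(∑ i, iteratedDeriv r (fun x => P.eval x) (s i) ^ 2)) := by
        gcongr
        · exact hlam j
        · exact P.abs_sum_mul_eval_add_sub_eval_le univ hdeg _ _ _ hh
    _ = _ := by
        rw [hcol, mul_sum]
        refine congrArg (lam + ·) (sum_congr rfl fun r _ => ?_)
        linear_combination (δ ^ r * (∑ j', |β j'|) ^ r / r ! *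
          √(∑ i, iteratedDeriv r (fun x => P.eval x) (s i) ^ 2)) * Real.sqrt_div_self' (x := n)

/-- Order-`R` version of Proposition 1 for a polynomial mean function: if `μ` is
a polynomial of degree at most `R`, the measured covariates are standardized,
`(1/n) max_j |∑ᵢ wᵢⱼ εᵢ| ≤ λ` and `|uᵢⱼ| ≤ δ`, then `β⁰` belongs to the
feasible set `Θ^R` of the order-`R` generalized matrix uncertainty selector. -/
theorem stmt_1 (n p R : ℕ) (hn : 1 ≤ n) (hp : 1 ≤ p)
    (X U W : Fin n → Fin p → ℝ)
    (hW : ∀ i j, W i j = X i j + U i j)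
    (μ : ℝ → ℝ) (P : Polynomial ℝ) (hdeg : P.natDegree ≤ R)
    (hμP : ∀ x, μ x = P.eval x)
    (β : Fin p → ℝ) (y : Fin n → ℝ) (ε : Fin n → ℝ)
    (hε : ∀ i, ε i = y i - μ (∑ j, X i j * β j))
    (lam δ : ℝ)
    (hstd : ∀ j, (1 / (n : ℝ)) * ∑ i, (W i j) ^ 2 = 1)
    (hlam : ∀ j, (1 / (n : ℝ)) * |∑ i, W i j * ε i| ≤ lam)
    (hδ : ∀ i j, |U i j| ≤ δ) :
    ∀ j, (1 / (n : ℝ)) * |∑ i, W i j * (y i - μ (∑ j', W i j' * β j'))| ≤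
      lam + ∑ r ∈ Finset.Icc 1 R,
        δ ^ r / ((Nat.factorial r : ℝ) * Real.sqrt n) * (∑ j', |β j'|) ^ r *
          Real.sqrt (∑ i, (iteratedDeriv r μ (∑ j', W i j' * β j')) ^ 2) :=
  stmt_1_general n p R X U W hW μ P hdeg hμP β y ε hε lam δ hstd hlam hδ
end

section
/- Let n, p ≥ 1, let X, U ∈ ℝ^{n×p} with W = X + U, and denote by x_i, u_i, w_i the i-th rows. Let β⁰ ∈ ℝ^p, y ∈ ℝ^n, and set ε_i = y_i − x_iᵀβ⁰. Assume: (i) (1/n)∑_{i=1}^n w_{ij}² = 1 for every j; (ii) (1/n) max_{1≤j≤p} |∑_{i=1}^n w_{ij} ε_i| ≤ λ; (iii) |u_{ij}| ≤ δ for all i, j. Then for every j = 1,…,p: (1/n)|∑_{i=1}^n w_{ij}(y_i − w_iᵀβ⁰)| ≤ λ + δ‖β⁰‖₁, i.e. β⁰ is a feasible point of the matrix uncertainty selector. -/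
/-!
Since `W = X + U`, the residual `y − Wβ⁰` equals `ε − Uβ⁰`, so the `j`-th score splits into
`∑ᵢ wᵢⱼ εᵢ`, controlled by `λ`, and the cross term `∑ᵢ wᵢⱼ (Uβ⁰)ᵢ`. Each `|(Uβ⁰)ᵢ| ≤ δ ‖β⁰‖₁`,
and standardization `∑ᵢ wᵢⱼ² = n` gives `∑ᵢ |wᵢⱼ| ≤ n` by Cauchy–Schwarz, so the cross term is at
most `n δ ‖β⁰‖₁`.
-/

open Finset

section

variable {ι κ : Type*} [Fintype ι] [Fintype κ]

theorem sum_abs_le_card_of_sum_sq_eq_card (a : ι → ℝ)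
    (h : ∑ i, a i ^ 2 = Fintype.card ι) : ∑ i, |a i| ≤ Fintype.card ι := by
  have hcs := sq_sum_le_card_mul_sum_sq (s := univ) (f := fun i => |a i|)
  simp only [card_univ, sq_abs, h] at hcs
  exact (pow_le_pow_iff_left₀ (sum_nonneg fun i _ => abs_nonneg _) (Nat.cast_nonneg _)
    two_ne_zero).mp (by simpa [sq] using hcs)

theorem abs_sum_mul_le_of_abs_le {δ : ℝ} (u β : κ → ℝ) (hu : ∀ k, |u k| ≤ δ) :
    |∑ k, u k * β k| ≤ δ * ∑ k, |β k| :=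
  calc |∑ k, u k * β k| ≤ ∑ k, |u k| * |β k| := by
        simpa only [abs_mul] using abs_sum_le_sum_abs (fun k => u k * β k) univ
    _ ≤ ∑ k, δ * |β k| := sum_le_sum fun k _ => mul_le_mul_of_nonneg_right (hu k) (abs_nonneg _)
    _ = δ * ∑ k, |β k| := (mul_sum _ _ _).symm

theorem abs_sum_mul_le_card_mul_of_sum_sq_eq_card {c : ℝ} (w r : ι → ℝ)
    (hw : ∑ i, w i ^ 2 = Fintype.card ι) (hr : ∀ i, |r i| ≤ c) :
    |∑ i, w i * r i| ≤ Fintype.card ι * c := by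
  cases isEmpty_or_nonempty ι with
  | inl _ => simp
  | inr hne =>
    have hc : 0 ≤ c := (abs_nonneg _).trans (hr hne.some)
    calc |∑ i, w i * r i| ≤ ∑ i, |w i| * |r i| := by
          simpa only [abs_mul] using abs_sum_le_sum_abs (fun i => w i * r i) univ
      _ ≤ ∑ i, |w i| * c := sum_le_sum fun i _ => mul_le_mul_of_nonneg_left (hr i) (abs_nonneg _)
      _ = (∑ i, |w i|) * c := (sum_mul _ _ _).symm
      _ ≤ Fintype.card ι * c :=
          mul_le_mul_of_nonneg_right (sum_abs_le_card_of_sum_sq_eq_card w hw) hc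

end

theorem stmt_2_general (n p : ℕ)
    (X U W : Fin n → Fin p → ℝ)
    (hW : ∀ i j, W i j = X i j + U i j)
    (β : Fin p → ℝ) (y : Fin n → ℝ) (ε : Fin n → ℝ)
    (hε : ∀ i, ε i = y i - ∑ j, X i j * β j)
    (lam δ : ℝ)
    (hstd : ∀ j, (1 / (n : ℝ)) * ∑ i, (W i j) ^ 2 = 1)
    (hlam : ∀ j, (1 / (n : ℝ)) * |∑ i, W i j * ε i| ≤ lam)
    (hδ : ∀ i j, |U i j| ≤ δ) :
    ∀ j, (1 / (n : ℝ)) * |∑ i, W i j * (y i - ∑ j', W i j' * β j')| ≤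
      lam + δ * ∑ j', |β j'| := by
  intro j
  have hn : (n : ℝ) ≠ 0 := fun h0 => by simpa [h0] using hstd j
  have hsq : ∑ i, W i j ^ 2 = n := by
    have h := hstd j
    rw [one_div, inv_mul_eq_one₀ hn] at h
    exact h.symm
  have hresidual : ∀ i, y i - ∑ j', W i j' * β j' = ε i - ∑ j', U i j' * β j' := by
    intro i
    simp only [hW, hε, add_mul, sum_add_distrib]
    ring
  have hcross : |∑ i, W i j * ∑ j', U i j' * β j'| ≤ n * (δ * ∑ j', |β j'|) := by
    simpa using abs_sum_mul_le_card_mul_of_sum_sq_eq_card (fun i => W i j) _ (by simpa using hsq)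
      fun i => abs_sum_mul_le_of_abs_le (U i) β (hδ i)
  simp only [hresidual, mul_sub, sum_sub_distrib]
  calc (1 / (n : ℝ)) * |∑ i, W i j * ε i - ∑ i, W i j * ∑ j', U i j' * β j'|
      ≤ (1 / (n : ℝ)) * (|∑ i, W i j * ε i| + n * (δ * ∑ j', |β j'|)) := by
        gcongr
        exact (abs_sub _ _).trans (add_le_add_right hcross _)
    _ = (1 / (n : ℝ)) * |∑ i, W i j * ε i| + δ * ∑ j', |β j'| := by field_simp
    _ ≤ lam + δ * ∑ j', |β j'| := by linarith [hlam j]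

/-- Linear-model special case of Proposition 1: under the additive measurement
error model `W = X + U`, standardized measured covariates, the residual bound
`(1/n) max_j |∑ᵢ wᵢⱼ εᵢ| ≤ λ` and the elementwise error bound `|uᵢⱼ| ≤ δ`, the
true coefficient vector `β⁰` is feasible for the matrix uncertainty selector:
`(1/n) |∑ᵢ wᵢⱼ (yᵢ − wᵢᵀβ⁰)| ≤ λ + δ ‖β⁰‖₁` for every `j`. -/
theorem stmt_2 (n p : ℕ) (hn : 1 ≤ n) (hp : 1 ≤ p)
    (X U W : Fin n → Fin p → ℝ)
    (hW : ∀ i j, W i j = X i j + U i j)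
    (β : Fin p → ℝ) (y : Fin n → ℝ) (ε : Fin n → ℝ)
    (hε : ∀ i, ε i = y i - ∑ j, X i j * β j)
    (lam δ : ℝ)
    (hstd : ∀ j, (1 / (n : ℝ)) * ∑ i, (W i j) ^ 2 = 1)
    (hlam : ∀ j, (1 / (n : ℝ)) * |∑ i, W i j * ε i| ≤ lam)
    (hδ : ∀ i j, |U i j| ≤ δ) :
    ∀ j, (1 / (n : ℝ)) * |∑ i, W i j * (y i - ∑ j', W i j' * β j')| ≤
      lam + δ * ∑ j', |β j'| :=
  stmt_2_general n p X U W hW β y ε hε lam δ hstd hlam hδ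
end

section
/- Let n, p ≥ 1, let x_i, u_i, w_i ∈ ℝ^p for i = 1,…,n with w_i = x_i + u_i, let μ : ℝ → ℝ be infinitely differentiable, and let β ∈ ℝ^p. Assume: (iii) |u_{ij}| ≤ δ for all i, j; (iv) for each i, the Taylor series ∑_{r=0}^∞ μ^{(r)}(w_iᵀβ)/r! · (−u_iᵀβ)^r has sum μ(x_iᵀβ); (v) the series with r-th term (δ^r ‖β‖₁^r / r!) · (∑_{i=1}^n μ^{(r)}(w_iᵀβ)²)^{1/2} (r ≥ 1) is summable. Then (∑_{i=1}^n (μ(x_iᵀβ) − μ(w_iᵀβ))²)^{1/2} ≤ ∑_{r=1}^∞ (δ^r ‖β‖₁^r / r!) · (∑_{i=1}^n μ^{(r)}(w_iᵀβ)²)^{1/2}. -/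
/-- Key intermediate estimate in the proof of Proposition 1: the Euclidean norm
of the vector of Taylor remainders `μ(xᵢᵀβ) − μ(wᵢᵀβ)` is bounded by the series
`∑_{r≥1} (δ^r ‖β‖₁^r / r!) (∑ᵢ μ^{(r)}(wᵢᵀβ)²)^{1/2}` (indexed here by
`r = k + 1`, `k : ℕ`). -/
theorem stmt_4 (n p : ℕ) (hn : 1 ≤ n) (hp : 1 ≤ p)
    (x u w : Fin n → Fin p → ℝ)
    (hw : ∀ i j, w i j = x i j + u i j)
    (μ : ℝ → ℝ) (hμ : ContDiff ℝ (⊤ : ℕ∞) μ)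
    (β : Fin p → ℝ) (δ : ℝ)
    (hδ : ∀ i j, |u i j| ≤ δ)
    (htaylor : ∀ i, HasSum
      (fun r : ℕ => iteratedDeriv r μ (∑ j, w i j * β j) / (Nat.factorial r : ℝ) *
        (-(∑ j, u i j * β j)) ^ r)
      (μ (∑ j, x i j * β j)))
    (hsum : Summable (fun k : ℕ =>
      δ ^ (k + 1) * (∑ j, |β j|) ^ (k + 1) / (Nat.factorial (k + 1) : ℝ) *
        Real.sqrt (∑ i, (iteratedDeriv (k + 1) μ (∑ j, w i j * β j)) ^ 2))) :
    Real.sqrt (∑ i, (μ (∑ j, x i j * β j) - μ (∑ j, w i j * β j)) ^ 2) ≤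
      ∑' k : ℕ,
        δ ^ (k + 1) * (∑ j, |β j|) ^ (k + 1) / (Nat.factorial (k + 1) : ℝ) *
          Real.sqrt (∑ i, (iteratedDeriv (k + 1) μ (∑ j, w i j * β j)) ^ 2) := by
  classical
  set W : Fin n → ℝ := fun i => ∑ j, w i j * β j with hW
  set U : Fin n → ℝ := fun i => ∑ j, u i j * β j with hU
  set B : ℝ := ∑ j, |β j| with hB
  have hB0 : 0 ≤ B := Finset.sum_nonneg fun j _ => abs_nonneg _
  have hδ0 : 0 ≤ δ := le_trans (abs_nonneg _) (hδ ⟨0, hn⟩ ⟨0, hp⟩)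
  have hUB : ∀ i, |U i| ≤ δ * B := by
    intro i
    calc |U i| ≤ ∑ j, |u i j * β j| := Finset.abs_sum_le_sum_abs _ _
      _ ≤ ∑ j, δ * |β j| := by
          refine Finset.sum_le_sum fun j _ => ?_
          rw [abs_mul]
          exact mul_le_mul_of_nonneg_right (hδ i j) (abs_nonneg _)
      _ = δ * B := by rw [hB, Finset.mul_sum]
  set g : ℕ → EuclideanSpace ℝ (Fin n) := fun k => WithLp.toLp 2 fun i =>
    iteratedDeriv (k + 1) μ (W i) / (Nat.factorial (k + 1) : ℝ) * (-(U i)) ^ (k + 1) with hg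
  set s : EuclideanSpace ℝ (Fin n) := WithLp.toLp 2 fun i => μ (∑ j, x i j * β j) - μ (W i) with hs
  set b : ℕ → ℝ := fun k =>
    δ ^ (k + 1) * B ^ (k + 1) / (Nat.factorial (k + 1) : ℝ) *
      Real.sqrt (∑ i, (iteratedDeriv (k + 1) μ (W i)) ^ 2) with hb
  -- componentwise HasSum
  have hgs : HasSum g s := by
    have h0 : HasSum (fun k (i : Fin n) =>
        iteratedDeriv (k + 1) μ (W i) / (Nat.factorial (k + 1) : ℝ) * (-(U i)) ^ (k + 1))
        (fun i => μ (∑ j, x i j * β j) - μ (W i)) := by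
      apply Pi.hasSum.2
      intro i
      have h1 := (hasSum_nat_add_iff' (f := fun r : ℕ =>
        iteratedDeriv r μ (W i) / (Nat.factorial r : ℝ) * (-(U i)) ^ r) 1).2 (htaylor i)
      simpa using h1
    exact (PiLp.continuousLinearEquiv 2 ℝ (fun _ : Fin n => ℝ)).symm.toContinuousLinearMap.hasSum h0
  -- norm bound
  have hcnn : ∀ k : ℕ, (0:ℝ) ≤ δ ^ (k + 1) * B ^ (k + 1) / (Nat.factorial (k + 1) : ℝ) :=
    fun k => div_nonneg (mul_nonneg (pow_nonneg hδ0 _) (pow_nonneg hB0 _)) (Nat.cast_nonneg _)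
  have hnormg : ∀ k, ‖g k‖ ≤ b k := by
    intro k
    rw [EuclideanSpace.norm_eq]
    set c : ℝ := δ ^ (k + 1) * B ^ (k + 1) / (Nat.factorial (k + 1) : ℝ) with hc
    have : ∑ i, ‖g k i‖ ^ 2 ≤ c ^ 2 * ∑ i, (iteratedDeriv (k + 1) μ (W i)) ^ 2 := by
      rw [Finset.mul_sum]
      refine Finset.sum_le_sum fun i _ => ?_
      have habs : |g k i| ≤ c * |iteratedDeriv (k + 1) μ (W i)| := by
        rw [hg]
        simp only [PiLp.toLp_apply]
        rw [abs_mul, abs_div, abs_pow, abs_neg]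
        calc |iteratedDeriv (k + 1) μ (W i)| / |(Nat.factorial (k + 1) : ℝ)| * |U i| ^ (k + 1)
            ≤ |iteratedDeriv (k + 1) μ (W i)| / (Nat.factorial (k + 1) : ℝ) * (δ * B) ^ (k + 1) := by
              rw [abs_of_nonneg (show (0:ℝ) ≤ (Nat.factorial (k+1) : ℝ) from Nat.cast_nonneg _)]
              exact mul_le_mul_of_nonneg_left (pow_le_pow_left₀ (abs_nonneg _) (hUB i) _)
                (div_nonneg (abs_nonneg _) (Nat.cast_nonneg _))
          _ = c * |iteratedDeriv (k + 1) μ (W i)| := by rw [hc, mul_pow]; ring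
      calc ‖g k i‖ ^ 2 = |g k i| ^ 2 := by rw [Real.norm_eq_abs]
        _ ≤ (c * |iteratedDeriv (k + 1) μ (W i)|) ^ 2 :=
            pow_le_pow_left₀ (abs_nonneg _) habs 2
        _ = c ^ 2 * (iteratedDeriv (k + 1) μ (W i)) ^ 2 := by rw [mul_pow, sq_abs]
    calc Real.sqrt (∑ i, ‖g k i‖ ^ 2)
        ≤ Real.sqrt (c ^ 2 * ∑ i, (iteratedDeriv (k + 1) μ (W i)) ^ 2) :=
          Real.sqrt_le_sqrt this
      _ = c * Real.sqrt (∑ i, (iteratedDeriv (k + 1) μ (W i)) ^ 2) := by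
          rw [Real.sqrt_mul (sq_nonneg c), Real.sqrt_sq (hcnn k)]
      _ = b k := rfl
  have hsumnorm : Summable fun k => ‖g k‖ :=
    Summable.of_nonneg_of_le (fun k => norm_nonneg _) hnormg hsum
  have key : ‖s‖ ≤ ∑' k, b k := by
    calc ‖s‖ = ‖∑' k, g k‖ := by rw [hgs.tsum_eq]
      _ ≤ ∑' k, ‖g k‖ := norm_tsum_le_tsum_norm hsumnorm
      _ ≤ ∑' k, b k := Summable.tsum_le_tsum hnormg hsumnorm hsum
  have hns : ‖s‖ = Real.sqrt (∑ i, (μ (∑ j, x i j * β j) - μ (W i)) ^ 2) := by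
    rw [EuclideanSpace.norm_eq]
    congr 1
    exact Finset.sum_congr rfl fun i _ => by rw [Real.norm_eq_abs, sq_abs]
  rw [← hns]
  exact key
end

section
/- Let n, p ≥ 1, let x_i ∈ ℝ^p for i = 1,…,n, y ∈ ℝ^n, λ ≥ 0, and let b : ℝ → ℝ be differentiable with derivative μ = b′. If β̂ is a local minimizer of the lasso objective L(β) = −(1/n)∑_{i=1}^n {y_i x_iᵀβ − b(x_iᵀβ)} + λ‖β‖₁, then (1/n) max_{1≤j≤p} |∑_{i=1}^n x_{ij}(y_i − μ(x_iᵀβ̂))| ≤ λ, i.e. β̂ belongs to the feasible set of the generalized Dantzig selector with parameter λ. -/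
/-!
Restrict the objective to the coordinate line `t ↦ β̂ + t eⱼ`. Its smooth part has derivative
`dⱼ = -(1/n) ∑ᵢ xᵢⱼ (yᵢ - μ(xᵢᵀβ̂))` at `t = 0`, while the penalty grows by at most `λ|t|`.
So `t ↦ f(t) + λ|t|`, with `f` differentiable and `f'(0) = dⱼ`, has a local minimum at `0`;
comparing one-sided slopes gives `-λ ≤ dⱼ ≤ λ`.
-/

open Filter Topology Matrix

theorem neg_le_of_hasDerivAt_of_isLocalMin_add_mul_abs {f : ℝ → ℝ} {d c : ℝ}
    (hf : HasDerivAt f d 0) (hmin : IsLocalMin (fun t => f t + c * |t|) 0) : -c ≤ d := by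
  refine ge_of_tendsto hf.tendsto_slope_zero_right ?_
  filter_upwards [self_mem_nhdsWithin, hmin.filter_mono nhdsWithin_le_nhds] with t ht hle
  have ht : 0 < t := ht
  simp only [abs_zero, mul_zero, add_zero, abs_of_pos ht] at hle
  rw [zero_add, smul_eq_mul, inv_mul_eq_div, le_div_iff₀ ht]
  linarith

theorem abs_le_of_hasDerivAt_of_isLocalMin_add_mul_abs {f : ℝ → ℝ} {d c : ℝ}
    (hf : HasDerivAt f d 0) (hmin : IsLocalMin (fun t => f t + c * |t|) 0) : |d| ≤ c := by
  have hright := neg_le_of_hasDerivAt_of_isLocalMin_add_mul_abs hf hmin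
  rw [← neg_zero] at hmin
  have hleft : -c ≤ -d := by
    refine neg_le_of_hasDerivAt_of_isLocalMin_add_mul_abs (f := fun t => f (-t)) ?_ ?_
    · simpa using HasDerivAt.comp_const_sub (0 : ℝ) 0 (f := f) (by simpa using hf)
    · simpa [Function.comp_def] using hmin.comp_continuous continuous_neg.continuousAt
  exact abs_le.mpr ⟨hright, by linarith⟩

section L1Penalty

variable {ι : Type*} [Fintype ι] [DecidableEq ι]

theorem sum_abs_add_single_le (β : ι → ℝ) (j : ι) (t : ℝ) :
    ∑ k, |β k + (Pi.single j t : ι → ℝ) k| ≤ ∑ k, |β k| + |t| := calc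
  ∑ k, |β k + (Pi.single j t : ι → ℝ) k| ≤ ∑ k, (|β k| + (Pi.single j |t| : ι → ℝ) k) :=
    Finset.sum_le_sum fun k _ => (abs_add_le _ _).trans_eq <| by
      rw [Pi.apply_single (fun _ => abs) (fun _ => abs_zero)]
  _ = ∑ k, |β k| + |t| := by simp [Finset.sum_add_distrib]

theorem abs_le_of_hasDerivAt_single_of_isLocalMin_add_mul_l1 {F : (ι → ℝ) → ℝ}
    {β : ι → ℝ} {j : ι} {d lam : ℝ} (hlam : 0 ≤ lam)
    (hF : HasDerivAt (fun t => F (β + Pi.single j t)) d 0)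
    (hmin : IsLocalMin (fun β => F β + lam * ∑ k, |β k|) β) : |d| ≤ lam := by
  have hline : IsLocalMin
      (fun t => F (β + Pi.single j t) + lam * ∑ k, |β k + (Pi.single j t : ι → ℝ) k|) 0 := by
    rw [← add_zero β, ← Pi.single_zero j] at hmin
    exact hmin.comp_continuous (g := fun t => β + Pi.single j t)
      (continuous_const.add (continuous_single j)).continuousAt
  refine abs_le_of_hasDerivAt_of_isLocalMin_add_mul_abs
    (f := fun t => F (β + Pi.single j t) + lam * ∑ k, |β k|) (hF.add_const _) ?_
  filter_upwards [hline] with t ht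
  have := mul_le_mul_of_nonneg_left (sum_abs_add_single_le β j t) hlam
  simp only [Pi.single_zero, Pi.zero_apply, add_zero, abs_zero, mul_zero] at ht ⊢
  linarith

end L1Penalty

section GLMLoss

variable {n : ℕ} {ι : Type*} [Fintype ι]

-- `x i ⬝ᵥ β` unfolds to `∑ j, x i j * β j`, so the objective of `stmt_7` is definitionally
-- `glmLoss x y b β + lam * ∑ j, |β j|`.
noncomputable def glmLoss (x : Fin n → ι → ℝ) (y : Fin n → ℝ) (b : ℝ → ℝ) (β : ι → ℝ) : ℝ :=
  -(1 / (n : ℝ)) * ∑ i, (y i * x i ⬝ᵥ β - b (x i ⬝ᵥ β))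

theorem hasDerivAt_glmLoss_add_single [DecidableEq ι] (x : Fin n → ι → ℝ) (y : Fin n → ℝ)
    {b μ : ℝ → ℝ} (hb : ∀ t, HasDerivAt b (μ t) t) (β : ι → ℝ) (j : ι) :
    HasDerivAt (fun t => glmLoss x y b (β + Pi.single j t))
      (-(1 / (n : ℝ)) * ∑ i, x i j * (y i - μ (x i ⬝ᵥ β))) 0 := by
  refine .const_mul _ (.fun_sum fun i _ => ?_)
  have hlin : HasDerivAt (fun t => x i ⬝ᵥ (β + Pi.single j t)) (x i j) 0 := by
    simp only [dotProduct_add, dotProduct_single]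
    simpa using ((hasDerivAt_id (0 : ℝ)).const_mul (x i j)).const_add (x i ⬝ᵥ β)
  have hb' : HasDerivAt (fun t => b (x i ⬝ᵥ (β + Pi.single j t))) (μ (x i ⬝ᵥ β) * x i j) 0 :=
    (hb (x i ⬝ᵥ β)).comp_of_eq 0 hlin (by simp)
  exact ((hlin.const_mul (y i)).fun_sub hb').congr_deriv (by ring)

end GLMLoss

theorem stmt_7_general (n p : ℕ)
    (x : Fin n → Fin p → ℝ) (y : Fin n → ℝ) (lam : ℝ) (hlam : 0 ≤ lam)
    (b μ : ℝ → ℝ) (hb : ∀ t, HasDerivAt b (μ t) t)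
    (βhat : Fin p → ℝ)
    (hmin : IsLocalMin
      (fun β : Fin p → ℝ =>
        -(1 / (n : ℝ)) * ∑ i, (y i * ∑ j, x i j * β j - b (∑ j, x i j * β j)) +
          lam * ∑ j, |β j|)
      βhat) :
    ∀ j, (1 / (n : ℝ)) * |∑ i, x i j * (y i - μ (∑ j', x i j' * βhat j'))| ≤ lam := by
  intro j
  have hscore := abs_le_of_hasDerivAt_single_of_isLocalMin_add_mul_l1 (F := glmLoss x y b) hlam
    (hasDerivAt_glmLoss_add_single x y hb βhat j) hmin
  rwa [abs_mul, abs_neg, abs_of_nonneg (by positivity)] at hscore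

/-- A local minimizer of the GLM lasso objective
`L(β) = −(1/n)∑ᵢ {yᵢ xᵢᵀβ − b(xᵢᵀβ)} + λ‖β‖₁` belongs to the feasible set of
the generalized Dantzig selector with the same parameter `λ`:
`(1/n) max_j |∑ᵢ xᵢⱼ (yᵢ − μ(xᵢᵀβ̂))| ≤ λ`, where `μ = b′`. -/
theorem stmt_7 (n p : ℕ) (hn : 1 ≤ n) (hp : 1 ≤ p)
    (x : Fin n → Fin p → ℝ) (y : Fin n → ℝ) (lam : ℝ) (hlam : 0 ≤ lam)
    (b μ : ℝ → ℝ) (hb : ∀ t, HasDerivAt b (μ t) t)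
    (βhat : Fin p → ℝ)
    (hmin : IsLocalMin
      (fun β : Fin p → ℝ =>
        -(1 / (n : ℝ)) * ∑ i, (y i * ∑ j, x i j * β j - b (∑ j, x i j * β j)) +
          lam * ∑ j, |β j|)
      βhat) :
    ∀ j, (1 / (n : ℝ)) * |∑ i, x i j * (y i - μ (∑ j', x i j' * βhat j'))| ≤ lam :=
  stmt_7_general n p x y lam hlam b μ hb βhat hmin
end
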